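/- Let J = (a,b)^{a_1} ∩ (a,c)^{a_2} ∩ (a,d)^{a_3} ∩ (b,c)^{a_4} ∩ (b,d)^{a_5} ∩ (c,d)^{a_6} in k[a,b,c,d] with not all a_i zero, and suppose a_1+a_2 ≥ a_4, a_1+a_3 ≥ a_5, a_2+a_3 ≥ a_6. Let a_i' = max{0, a_i − 1}. Then J = a·I + (b^{a_1} c^{a_2} d^{a_3}), where I = (a,b)^{a_1'} ∩ (a,c)^{a_2'} ∩ (a,d)^{a_3'} ∩ (b,c)^{a_4} ∩ (b,d)^{a_5} ∩ (c,d)^{a_6}. -/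

import Mathlib

/-!
Every ideal in sight is a monomial ideal: `(x_i, x_j)^n` is spanned by the monomials `x^v` with
`v_i + v_j ≥ n`, so `J` is spanned by the monomials whose exponents satisfy six inequalities
`a_{ij} ≤ v_i + v_j`. If `v_0 ≥ 1`, then `x^v = a · x^{v - e_0}` and `v - e_0` satisfies the
inequalities with the first three weights lowered by one. If `v_0 = 0`, the first three
inequalities say `v ≥ (0, a_1, a_2, a_3)`, i.e. `F ∣ x^v`. Conversely `a · I ⊆ J` directly, and
`F ∈ J` is exactly the three hypotheses `a_4 ≤ a_1 + a_2`, `a_5 ≤ a_1 + a_3`, `a_6 ≤ a_2 + a_3`.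
-/

open MvPolynomial


/-- The defining ideal of the tetrahedral curve `(a 0, …, a 5)` in `k[a,b,c,d]`. -/
noncomputable def tetIdeal (k : Type) [Field k] (a : Fin 6 → ℕ) : Ideal (MvPolynomial (Fin 4) k) :=
  (Ideal.span {X 0, X 1}) ^ (a 0) ⊓ (Ideal.span {X 0, X 2}) ^ (a 1) ⊓
  (Ideal.span {X 0, X 3}) ^ (a 2) ⊓ (Ideal.span {X 1, X 2}) ^ (a 3) ⊓
  (Ideal.span {X 1, X 3}) ^ (a 4) ⊓ (Ideal.span {X 2, X 3}) ^ (a 5)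

open scoped Pointwise

namespace MvPolynomial

variable {σ R : Type*} [CommSemiring R]

noncomputable def monomialSpan (S : Set (σ →₀ ℕ)) : Ideal (MvPolynomial σ R) :=
  Ideal.span ((fun s => monomial s 1) '' S)

theorem monomialSpan_mono {S T : Set (σ →₀ ℕ)} (h : S ⊆ T) :
    (monomialSpan S : Ideal (MvPolynomial σ R)) ≤ monomialSpan T :=
  Ideal.span_mono (Set.image_mono h)

theorem monomialSpan_le_of_forall_exists_le {S T : Set (σ →₀ ℕ)}
    (h : ∀ s ∈ S, ∃ t ∈ T, t ≤ s) :
    (monomialSpan S : Ideal (MvPolynomial σ R)) ≤ monomialSpan T := by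
  refine Ideal.span_le.2 ?_
  rintro _ ⟨s, hs, rfl⟩
  obtain ⟨t, ht, hts⟩ := h s hs
  have hdvd : monomial s (1 : R) = monomial (s - t) 1 * monomial t 1 := by
    rw [monomial_mul, one_mul, tsub_add_cancel_of_le hts]
  show monomial s (1 : R) ∈ monomialSpan T
  rw [hdvd]
  exact Ideal.mul_mem_left _ _ (Ideal.subset_span ⟨t, ht, rfl⟩)

theorem monomialSpan_union (S T : Set (σ →₀ ℕ)) :
    (monomialSpan (S ∪ T) : Ideal (MvPolynomial σ R)) = monomialSpan S ⊔ monomialSpan T := by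
  rw [monomialSpan, Set.image_union, Ideal.span_union]; rfl

theorem monomialSpan_add (S T : Set (σ →₀ ℕ)) :
    (monomialSpan (S + T) : Ideal (MvPolynomial σ R)) = monomialSpan S * monomialSpan T := by
  rw [monomialSpan, monomialSpan, monomialSpan, Ideal.span_mul_span', ← Set.image2_mul,
    Set.image2_image_left, Set.image2_image_right, ← Set.image2_add, Set.image_image2]
  simp only [monomial_mul, mul_one]

theorem monomialSpan_singleton (s : σ →₀ ℕ) :
    (monomialSpan {s} : Ideal (MvPolynomial σ R)) = Ideal.span {monomial s 1} := by
  rw [monomialSpan, Set.image_singleton]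

theorem mem_monomialSpan_iff {S : Set (σ →₀ ℕ)} (hS : IsUpperSet S) {f : MvPolynomial σ R} :
    f ∈ monomialSpan S ↔ ∀ m ∈ f.support, m ∈ S := by
  rw [monomialSpan, mem_ideal_span_monomial_image]
  exact forall₂_congr fun m _ =>
    ⟨fun ⟨s, hs, hsm⟩ => hS hsm hs, fun hm => ⟨m, hm, le_rfl⟩⟩

theorem span_X_pair (i j : σ) :
    (Ideal.span {X i, X j} : Ideal (MvPolynomial σ R))
      = monomialSpan {Finsupp.single i 1, Finsupp.single j 1} := by
  rw [monomialSpan, Set.image_pair]; rfl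

theorem isUpperSet_setOf_le_add (i j : σ) (n : ℕ) :
    IsUpperSet {v : σ →₀ ℕ | n ≤ v i + v j} :=
  fun _ _ hvw hv => hv.trans (add_le_add (hvw i) (hvw j))

theorem span_X_pair_pow {i j : σ} (hij : i ≠ j) (n : ℕ) :
    (Ideal.span {X i, X j} : Ideal (MvPolynomial σ R)) ^ n
      = monomialSpan {v | n ≤ v i + v j} := by
  induction n with
  | zero =>
    rw [pow_zero, Ideal.one_eq_top, eq_comm, Ideal.eq_top_iff_one, one_def]
    exact Ideal.subset_span ⟨0, Nat.zero_le _, rfl⟩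
  | succ n ih =>
    rw [pow_succ, ih, span_X_pair, ← monomialSpan_add]
    apply le_antisymm
    · refine monomialSpan_mono ?_
      rintro _ ⟨v, hv, e, he | he, rfl⟩ <;> subst he <;>
        simp only [Set.mem_ofPred_eq, Finsupp.add_apply, Finsupp.single_eq_same,
          Finsupp.single_eq_of_ne hij, Finsupp.single_eq_of_ne hij.symm] at hv ⊢ <;> omega
    · refine monomialSpan_le_of_forall_exists_le fun v hv => ⟨v, ?_, le_rfl⟩
      rw [Set.mem_ofPred_eq] at hv
      rcases Nat.eq_zero_or_pos (v i) with hi | hi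
      · refine ⟨v - Finsupp.single j 1, ?_, Finsupp.single j 1, by simp,
          tsub_add_cancel_of_le (Finsupp.single_le_iff.2 (by omega))⟩
        simp [hij]
        omega
      · refine ⟨v - Finsupp.single i 1, ?_, Finsupp.single i 1, by simp,
          tsub_add_cancel_of_le (Finsupp.single_le_iff.2 hi)⟩
        simp [hij]
        omega

end MvPolynomial

open Finsupp

def tetSet (a : Fin 6 → ℕ) : Set (Fin 4 →₀ ℕ) :=
  {v | a 0 ≤ v 0 + v 1 ∧ a 1 ≤ v 0 + v 2 ∧ a 2 ≤ v 0 + v 3 ∧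
       a 3 ≤ v 1 + v 2 ∧ a 4 ≤ v 1 + v 3 ∧ a 5 ≤ v 2 + v 3}

theorem isUpperSet_tetSet (a : Fin 6 → ℕ) : IsUpperSet (tetSet a) := by
  rintro v w hvw ⟨h01, h02, h03, h12, h13, h23⟩
  have := hvw 0; have := hvw 1; have := hvw 2; have := hvw 3
  exact ⟨by omega, by omega, by omega, by omega, by omega, by omega⟩

theorem tetIdeal_eq_monomialSpan {k : Type} [Field k] (a : Fin 6 → ℕ) :
    tetIdeal k a = monomialSpan (tetSet a) := by
  ext f
  rw [mem_monomialSpan_iff (isUpperSet_tetSet a)]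
  simp only [tetIdeal, Ideal.mem_inf, span_X_pair_pow (show (0 : Fin 4) ≠ 1 by decide),
    span_X_pair_pow (show (0 : Fin 4) ≠ 2 by decide), span_X_pair_pow (show (0 : Fin 4) ≠ 3 by decide),
    span_X_pair_pow (show (1 : Fin 4) ≠ 2 by decide), span_X_pair_pow (show (1 : Fin 4) ≠ 3 by decide),
    span_X_pair_pow (show (2 : Fin 4) ≠ 3 by decide),
    mem_monomialSpan_iff (isUpperSet_setOf_le_add _ _ _), tetSet, Set.mem_ofPred_eq,
    ← forall₂_and, and_assoc]

theorem single_add_mem_tetSet {a : Fin 6 → ℕ} {v : Fin 4 →₀ ℕ}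
    (hv : v ∈ tetSet ![a 0 - 1, a 1 - 1, a 2 - 1, a 3, a 4, a 5]) :
    single 0 1 + v ∈ tetSet a := by
  simp [tetSet] at hv ⊢
  omega

theorem mem_single_add_tetSet {a : Fin 6 → ℕ} {v : Fin 4 →₀ ℕ} (hv : v ∈ tetSet a)
    (h0 : 0 < v 0) : v ∈ {single 0 1} + tetSet ![a 0 - 1, a 1 - 1, a 2 - 1, a 3, a 4, a 5] := by
  refine ⟨single 0 1, rfl, v - single 0 1, ?_, add_tsub_cancel_of_le (single_le_iff.2 h0)⟩
  obtain ⟨h01, h02, h03, h12, h13, h23⟩ := hv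
  simp [tetSet]
  omega

-- The exponent vector of the linking monomial `F = b^{a₁} c^{a₂} d^{a₃}`.
noncomputable def tetLinkExponent (a : Fin 6 → ℕ) : Fin 4 →₀ ℕ :=
  single 1 (a 0) + single 2 (a 1) + single 3 (a 2)

theorem tetLinkExponent_mem_tetSet {a : Fin 6 → ℕ} (h1 : a 3 ≤ a 0 + a 1)
    (h2 : a 4 ≤ a 0 + a 2) (h3 : a 5 ≤ a 1 + a 2) : tetLinkExponent a ∈ tetSet a := by
  simp [tetSet, tetLinkExponent]
  omega

theorem tetLinkExponent_le {a : Fin 6 → ℕ} {v : Fin 4 →₀ ℕ} (hv : v ∈ tetSet a)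
    (h0 : v 0 = 0) : tetLinkExponent a ≤ v := by
  obtain ⟨h01, h02, h03, -, -, -⟩ := hv
  intro i
  fin_cases i <;> simp [tetLinkExponent] <;> omega

theorem stmt16_general {k : Type} [Field k] (a : Fin 6 → ℕ)
    (h1 : a 3 ≤ a 0 + a 1) (h2 : a 4 ≤ a 0 + a 2) (h3 : a 5 ≤ a 1 + a 2) :
    tetIdeal k a =
      Ideal.span {X 0} * tetIdeal k ![a 0 - 1, a 1 - 1, a 2 - 1, a 3, a 4, a 5] +
      Ideal.span {X 1 ^ a 0 * X 2 ^ a 1 * X 3 ^ a 2} := by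
  have hX : (Ideal.span {X 0} : Ideal (MvPolynomial (Fin 4) k)) = monomialSpan {single 0 1} :=
    (monomialSpan_singleton _).symm
  have hF : (Ideal.span {X 1 ^ a 0 * X 2 ^ a 1 * X 3 ^ a 2} : Ideal (MvPolynomial (Fin 4) k))
      = monomialSpan {tetLinkExponent a} := by
    rw [monomialSpan_singleton, tetLinkExponent, X_pow_eq_monomial, X_pow_eq_monomial,
      X_pow_eq_monomial, monomial_mul, monomial_mul, one_mul, one_mul]
  rw [tetIdeal_eq_monomialSpan, tetIdeal_eq_monomialSpan, hX, hF, ← monomialSpan_add,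
    Ideal.add_eq_sup, ← monomialSpan_union]
  apply le_antisymm
  · refine monomialSpan_le_of_forall_exists_le fun v hv => ?_
    rcases Nat.eq_zero_or_pos (v 0) with h0 | h0
    · exact ⟨_, Or.inr rfl, tetLinkExponent_le hv h0⟩
    · exact ⟨v, Or.inl (mem_single_add_tetSet hv h0), le_rfl⟩
  · refine monomialSpan_mono (Set.union_subset ?_ ?_)
    · rintro _ ⟨_, rfl, w, hw, rfl⟩
      exact single_add_mem_tetSet hw
    · exact Set.singleton_subset_iff.2 (tetLinkExponent_mem_tetSet h1 h2 h3)

/-- Basic double link structure of a tetrahedral curve: if `a₁+a₂ ≥ a₄`, `a₁+a₃ ≥ a₅`,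
`a₂+a₃ ≥ a₆`, then `J = a·I + (b^{a₁} c^{a₂} d^{a₃})`, where `I` is the ideal of the
tetrahedral curve with the first three weights reduced by one (truncated at 0). -/
theorem stmt16 {k : Type} [Field k] (a : Fin 6 → ℕ) (hnt : ∃ i, a i ≠ 0)
    (h1 : a 3 ≤ a 0 + a 1) (h2 : a 4 ≤ a 0 + a 2) (h3 : a 5 ≤ a 1 + a 2) :
    tetIdeal k a =
      Ideal.span {X 0} * tetIdeal k ![a 0 - 1, a 1 - 1, a 2 - 1, a 3, a 4, a 5] +
      Ideal.span {X 1 ^ a 0 * X 2 ^ a 1 * X 3 ^ a 2} :=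
  stmt16_general a h1 h2 h3
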